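/- arXiv:2209.01406 — 4 statements merged into one kernel-verified Lean document; each statement's English description precedes it below -/
import Mathlib

section
/- Let X and Y be normed real vector spaces and let Φ : X → Y be an isometric embedding (‖Φ x₁ − Φ x₂‖ = ‖x₁ − x₂‖ for all x₁, x₂ ∈ X). Then the following are equivalent: (1) Φ is linear; (2) the image Φ(X) is a linear subspace of Y and Φ(0) = 0. -/
/-- An isometric embedding of normed real vector spaces is linear if and only
if its image is a linear subspace and it maps zero to zero. -/
theorem isometric_embedding_linear_iff
    {X Y : Type*} [NormedAddCommGroup X] [NormedSpace ℝ X]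
    [NormedAddCommGroup Y] [NormedSpace ℝ Y]
    (Φ : X → Y) (hiso : ∀ x₁ x₂ : X, ‖Φ x₁ - Φ x₂‖ = ‖x₁ - x₂‖) :
    IsLinearMap ℝ Φ ↔
      ((0 : Y) ∈ Set.range Φ ∧
        (∀ y₁ ∈ Set.range Φ, ∀ y₂ ∈ Set.range Φ, y₁ + y₂ ∈ Set.range Φ) ∧
        (∀ (c : ℝ), ∀ y ∈ Set.range Φ, c • y ∈ Set.range Φ) ∧
        Φ 0 = 0) := by
  constructor
  · rintro hlin
    have h0 : Φ 0 = 0 := (IsLinearMap.mk' Φ hlin).map_zero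
    refine ⟨⟨0, h0⟩, ?_, ?_, h0⟩
    · rintro _ ⟨x₁, rfl⟩ _ ⟨x₂, rfl⟩
      exact ⟨x₁ + x₂, hlin.map_add x₁ x₂⟩
    · rintro c _ ⟨x, rfl⟩
      exact ⟨c • x, hlin.map_smul c x⟩
  · rintro ⟨-, hadd, hsmul, h0⟩
    -- the range is a submodule
    set S : Submodule ℝ Y :=
      { carrier := Set.range Φ
        add_mem' := fun ha hb => hadd _ ha _ hb
        zero_mem' := ⟨0, h0⟩
        smul_mem' := fun c y hy => hsmul c y hy }
    have hinj : Function.Injective Φ := by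
      intro a b hab
      have := hiso a b
      rw [hab, sub_self, norm_zero] at this
      exact sub_eq_zero.mp (norm_eq_zero.mp this.symm) 
    have hbij : Function.Bijective (fun x => (⟨Φ x, Set.mem_range_self x⟩ : S)) := by
      constructor
      · intro a b hab
        exact hinj (congrArg Subtype.val hab)
      · rintro ⟨y, x, rfl⟩
        exact ⟨x, rfl⟩
    let e : X ≃ᵢ S :=
      { toEquiv := Equiv.ofBijective _ hbij
        isometry_toFun := by
          intro a b
          simp only [Equiv.ofBijective]
          rw [Subtype.edist_eq, edist_dist, edist_dist, dist_eq_norm, dist_eq_norm, hiso a b] }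
    have he0 : e 0 = 0 := Subtype.ext h0
    let f := e.toRealLinearIsometryEquivOfMapZero he0
    have hf : ∀ x, Φ x = (f x : Y) := fun x => rfl
    constructor
    · intro a b
      rw [hf, hf, hf, f.map_add]; rfl
    · intro c x
      rw [hf, hf, f.map_smul]; rfl
end

section
/- Let X be a normed real vector space, let Y be a seminormed real vector space, and let Φ : X → Y be a pseudoisometric embedding (‖Φ x₁ − Φ x₂‖ = ‖x₁ − x₂‖ for all x₁, x₂ ∈ X). Then the following are equivalent: (1) Φ is linear; (2) the image Φ(X) is a linear subspace of Y and Φ(0) = 0. -/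
/-- A pseudoisometric embedding of a normed real vector space into a
seminormed real vector space is linear if and only if its image is a linear
subspace and it maps zero to zero. -/
theorem pseudoisometric_embedding_linear_iff_of_normed_domain
    {X Y : Type*} [NormedAddCommGroup X] [NormedSpace ℝ X]
    [SeminormedAddCommGroup Y] [NormedSpace ℝ Y]
    (Φ : X → Y) (hiso : ∀ x₁ x₂ : X, ‖Φ x₁ - Φ x₂‖ = ‖x₁ - x₂‖) :
    IsLinearMap ℝ Φ ↔
      ((0 : Y) ∈ Set.range Φ ∧
        (∀ y₁ ∈ Set.range Φ, ∀ y₂ ∈ Set.range Φ, y₁ + y₂ ∈ Set.range Φ) ∧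
        (∀ (c : ℝ), ∀ y ∈ Set.range Φ, c • y ∈ Set.range Φ) ∧
        Φ 0 = 0) := by
  constructor
  · intro h
    have h0 : Φ 0 = 0 := (h.mk' Φ).map_zero
    refine ⟨⟨0, h0⟩, ?_, ?_, h0⟩
    · rintro _ ⟨a, rfl⟩ _ ⟨b, rfl⟩
      exact ⟨a + b, h.map_add a b⟩
    · rintro c _ ⟨a, rfl⟩
      exact ⟨c • a, h.map_smul c a⟩
  · rintro ⟨-, hadd, hsmul, h0⟩
    -- Pass to the separation quotient, a normed space.
    set ψ : X → SeparationQuotient Y := fun x => SeparationQuotient.mk (Φ x) with hψ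
    have hψiso : ∀ x₁ x₂ : X, ‖ψ x₁ - ψ x₂‖ = ‖x₁ - x₂‖ := by
      intro x₁ x₂
      show ‖SeparationQuotient.mk (Φ x₁) - SeparationQuotient.mk (Φ x₂)‖ = _
      rw [← SeparationQuotient.mk_sub, SeparationQuotient.norm_mk]
      exact hiso x₁ x₂
    have hψinj : Function.Injective ψ := by
      intro a b hab
      have : ‖a - b‖ = 0 := by rw [← hψiso a b, hab, sub_self, norm_zero]
      rwa [norm_eq_zero, sub_eq_zero] at this
    -- The image of ψ is a submodule.
    set T : Submodule ℝ (SeparationQuotient Y) :=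
      { carrier := Set.range ψ
        add_mem' := by
          rintro _ _ ⟨a, rfl⟩ ⟨b, rfl⟩
          obtain ⟨c, hc⟩ := hadd (Φ a) ⟨a, rfl⟩ (Φ b) ⟨b, rfl⟩
          exact ⟨c, by simp [hψ, hc, SeparationQuotient.mk_add]⟩
        zero_mem' := ⟨0, by simp [hψ, h0]⟩
        smul_mem' := by
          rintro c _ ⟨a, rfl⟩
          obtain ⟨w, hw⟩ := hsmul c (Φ a) ⟨a, rfl⟩
          exact ⟨w, by simp [hψ, hw, SeparationQuotient.mk_smul]⟩ } with hT
    -- ψ gives an isometric equivalence X ≃ᵢ T.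
    have hmem : ∀ x, ψ x ∈ T := fun x => ⟨x, rfl⟩
    set e : X ≃ T := Equiv.ofBijective (fun x => ⟨ψ x, hmem x⟩)
      ⟨fun a b hab => hψinj (congrArg Subtype.val hab), by
        rintro ⟨_, a, rfl⟩; exact ⟨a, rfl⟩⟩ with he
    have hiso' : Isometry e := by
      intro a b
      rw [edist_dist, edist_dist]
      congr 1
      show dist (ψ a) (ψ b) = dist a b
      rw [dist_eq_norm, dist_eq_norm, hψiso]
    set E : X ≃ᵢ T := ⟨e, hiso'⟩ with hE
    have hE0 : E 0 = 0 := by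
      apply Subtype.ext
      show ψ 0 = 0
      simp [hψ, h0]
    let hlin := E.toRealLinearIsometryEquivOfMapZero hE0
    have hker : ∀ x, (hlin x : SeparationQuotient Y) = ψ x := by
      intro x
      show ((E.toRealLinearIsometryEquivOfMapZero hE0) x : SeparationQuotient Y) = ψ x
      rw [IsometryEquiv.coe_toRealLinearIsometryEquivOfMapZero]
      rfl
    have hψadd : ∀ a b : X, ψ (a + b) = ψ a + ψ b := by
      intro a b
      have h2 := congrArg Subtype.val (hlin.map_add a b)
      simp only [Submodule.coe_add, hker] at h2
      exact h2
    have hψsmul : ∀ (c : ℝ) (a : X), ψ (c • a) = c • ψ a := by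
      intro c a
      have h2 := congrArg Subtype.val (hlin.map_smul c a)
      simp only [SetLike.val_smul, hker] at h2
      exact h2
    -- transfer back to Φ using that the image is closed under the operations
    have key : ∀ (a : X) (y : Y), y ∈ Set.range Φ → ψ a = SeparationQuotient.mk y → Φ a = y := by
      rintro a _ ⟨w, rfl⟩ hmk
      have : ‖Φ a - Φ w‖ = 0 := by
        have : SeparationQuotient.mk (Φ a - Φ w) = 0 := by
          rw [SeparationQuotient.mk_sub, sub_eq_zero]; exact hmk
        rw [← SeparationQuotient.norm_mk (Φ a - Φ w), this, norm_zero]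
      rw [hiso a w, norm_eq_zero, sub_eq_zero] at this
      rw [this]
    constructor
    · intro a b
      apply key
      · exact hadd (Φ a) ⟨a, rfl⟩ (Φ b) ⟨b, rfl⟩
      · rw [hψadd]; rfl
    · intro c a
      apply key
      · exact hsmul c (Φ a) ⟨a, rfl⟩
      · rw [hψsmul]; rfl
end

section
/- Let X and Y be seminormed real vector spaces, let Z_X = {z ∈ X : ‖z‖ = 0} be the null subspace of X, and let Φ : X → Y be a pseudoisometric embedding (‖Φ x₁ − Φ x₂‖ = ‖x₁ − x₂‖ for all x₁, x₂ ∈ X). Then the following are equivalent: (1) Φ is linear; (2) the restriction of Φ to Z_X is linear, and there exists a linear subspace W of X such that X = W ⊕ Z_X, the image Φ(W) is a linear subspace of Y, and Φ(w + z) = Φ(w) + Φ(z) for all w ∈ W and z ∈ Z_X. -/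
/-- A pseudoisometric embedding `Φ` of seminormed real vector spaces is linear
if and only if `Φ` restricted to the null subspace `Z_X` is linear and there
is a linear subspace `W` with `X = W ⊕ Z_X` such that `Φ(W)` is a linear
subspace and `Φ (w + z) = Φ w + Φ z` for all `w ∈ W`, `z ∈ Z_X`. -/
theorem pseudoisometric_embedding_linear_iff
    {X Y : Type*} [SeminormedAddCommGroup X] [NormedSpace ℝ X]
    [SeminormedAddCommGroup Y] [NormedSpace ℝ Y]
    (Φ : X → Y) (hiso : ∀ x₁ x₂ : X, ‖Φ x₁ - Φ x₂‖ = ‖x₁ - x₂‖) :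
    IsLinearMap ℝ Φ ↔
      ((∀ z₁ z₂ : X, ‖z₁‖ = 0 → ‖z₂‖ = 0 → Φ (z₁ + z₂) = Φ z₁ + Φ z₂) ∧
        (∀ (c : ℝ) (z : X), ‖z‖ = 0 → Φ (c • z) = c • Φ z) ∧
        ∃ W : Submodule ℝ X,
          (∀ x : X, x ∈ W → ‖x‖ = 0 → x = 0) ∧
          (∀ x : X, ∃ w ∈ W, ∃ z : X, ‖z‖ = 0 ∧ x = w + z) ∧
          (0 : Y) ∈ Φ '' W ∧
          (∀ y₁ ∈ Φ '' (W : Set X), ∀ y₂ ∈ Φ '' (W : Set X), y₁ + y₂ ∈ Φ '' (W : Set X)) ∧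
          (∀ (c : ℝ), ∀ y ∈ Φ '' (W : Set X), c • y ∈ Φ '' (W : Set X)) ∧
          (∀ w ∈ W, ∀ z : X, ‖z‖ = 0 → Φ (w + z) = Φ w + Φ z)) := by
  constructor
  · intro hlin
    have hΦ0 : Φ 0 = 0 := by
      have := hlin.map_smul 0 0
      simpa using this
    refine ⟨fun z₁ z₂ _ _ => hlin.map_add _ _, fun c z _ => hlin.map_smul c z, ?_⟩
    obtain ⟨W, hW⟩ := Submodule.exists_isCompl (nullSubmodule ℝ X)
    refine ⟨W, ?_, ?_, ⟨0, W.zero_mem, hΦ0⟩, ?_, ?_, fun w _ z _ => hlin.map_add w z⟩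
    · intro x hxW hx0
      exact (Submodule.disjoint_def.mp hW.disjoint) x hx0 hxW
    · intro x
      have hx : x ∈ (nullSubmodule ℝ X) ⊔ W := by rw [hW.sup_eq_top]; trivial
      obtain ⟨z, hz, w, hw, rfl⟩ := Submodule.mem_sup.mp hx
      exact ⟨w, hw, z, hz, add_comm z w⟩
    · rintro y₁ ⟨w₁, hw₁, rfl⟩ y₂ ⟨w₂, hw₂, rfl⟩
      exact ⟨w₁ + w₂, W.add_mem hw₁ hw₂, hlin.map_add w₁ w₂⟩
    · rintro c y ⟨w, hw, rfl⟩
      exact ⟨c • w, W.smul_mem c hw, hlin.map_smul c w⟩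
  · rintro ⟨haddZ, hsmulZ, W, hWnorm, hdecomp, h0S, haddS, hsmulS, hWZ⟩
    have hΦ0 : Φ 0 = 0 := by
      have h := haddZ 0 0 norm_zero norm_zero
      rw [add_zero] at h
      exact (left_eq_add.mp h)
    have hnorm : ∀ x : X, ‖Φ x‖ = ‖x‖ := by
      intro x
      have := hiso x 0
      simpa [hΦ0] using this
    -- null elements of the image of W are zero
    have hSnull : ∀ y ∈ Φ '' (W : Set X), ‖y‖ = 0 → y = 0 := by
      rintro y ⟨w, hw, rfl⟩ hy
      have hw0 : w = 0 := hWnorm w hw (by rw [← hnorm w]; exact hy)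
      rw [hw0, hΦ0]
    have hkey : ∀ y₁ ∈ Φ '' (W : Set X), ∀ y₂ ∈ Φ '' (W : Set X), ‖y₁ - y₂‖ = 0 → y₁ = y₂ := by
      intro y₁ hy₁ y₂ hy₂ h
      have hmem : y₁ - y₂ ∈ Φ '' (W : Set X) := by
        have := haddS y₁ hy₁ ((-1 : ℝ) • y₂) (hsmulS (-1) y₂ hy₂)
        simpa [neg_one_smul, sub_eq_add_neg] using this
      have := hSnull _ hmem h
      exact sub_eq_zero.mp this
    -- the image of W in the separation quotient, as a submodule
    set S : Set Y := Φ '' (W : Set X) with hS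
    let T : Submodule ℝ (SeparationQuotient Y) :=
      { carrier := SeparationQuotient.mk '' S
        add_mem' := by
          rintro a b ⟨s₁, hs₁, rfl⟩ ⟨s₂, hs₂, rfl⟩
          exact ⟨s₁ + s₂, haddS s₁ hs₁ s₂ hs₂, rfl⟩
        zero_mem' := ⟨0, h0S, rfl⟩
        smul_mem' := by
          rintro c a ⟨s, hs, rfl⟩
          exact ⟨c • s, hsmulS c s hs, rfl⟩ }
    letI : NormedAddCommGroup ↥W := NormedAddCommGroup.ofSeparation (by
      intro w hw
      have : (w : X) = 0 := hWnorm w w.2 hw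
      exact Subtype.ext this)
    -- the induced bijective isometry from W onto T
    let f : ↥W → ↥T := fun w => ⟨SeparationQuotient.mk (Φ w), ⟨Φ w, ⟨w, w.2, rfl⟩, rfl⟩⟩
    have hfinj : Function.Injective f := by
      intro w₁ w₂ h
      have h1 : SeparationQuotient.mk (Φ w₁) = SeparationQuotient.mk (Φ w₂) :=
        congrArg Subtype.val h
      have h2 : ‖Φ (w₁ : X) - Φ (w₂ : X)‖ = 0 := by
        have : SeparationQuotient.mk (Φ (w₁ : X) - Φ (w₂ : X)) = (0 : SeparationQuotient Y) := by
          have : SeparationQuotient.mk (Φ (w₁:X)) - SeparationQuotient.mk (Φ (w₂:X))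
              = (0 : SeparationQuotient Y) := by rw [h1, sub_self]
          exact this
        rw [← SeparationQuotient.norm_mk (Φ (w₁ : X) - Φ (w₂ : X)), this, norm_zero]
      have h3 : ‖(w₁ : X) - (w₂ : X)‖ = 0 := by rw [← hiso]; exact h2
      have h4 : (w₁ : X) - (w₂ : X) = 0 :=
        hWnorm _ (W.sub_mem w₁.2 w₂.2) h3
      exact Subtype.ext (sub_eq_zero.mp h4)
    have hfsurj : Function.Surjective f := by
      rintro ⟨t, ⟨s, ⟨w, hw, rfl⟩, rfl⟩⟩
      exact ⟨⟨w, hw⟩, rfl⟩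
    let e : ↥W ≃ᵢ ↥T :=
      { toEquiv := Equiv.ofBijective f ⟨hfinj, hfsurj⟩
        isometry_toFun := Isometry.of_dist_eq (by
          intro w₁ w₂
          show dist (f w₁) (f w₂) = dist w₁ w₂
          rw [Subtype.dist_eq, Subtype.dist_eq]
          show dist (SeparationQuotient.mk (Φ w₁)) (SeparationQuotient.mk (Φ w₂)) = _
          rw [dist_eq_norm, dist_eq_norm]
          have : SeparationQuotient.mk (Φ (w₁:X)) - SeparationQuotient.mk (Φ (w₂:X))
              = SeparationQuotient.mk (Φ (w₁:X) - Φ (w₂:X)) := rfl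
          rw [this, SeparationQuotient.norm_mk, hiso]) }
    have he0 : e 0 = 0 := by
      apply Subtype.ext
      show SeparationQuotient.mk (Φ ((0 : ↥W) : X)) = 0
      rw [ZeroMemClass.coe_zero, hΦ0]
      rfl
    let L := e.toRealLinearIsometryEquivOfMapZero he0
    have hLe : ∀ w : ↥W, (L w : SeparationQuotient Y) = SeparationQuotient.mk (Φ (w : X)) :=
      fun w => rfl
    -- additivity on W
    have haddW : ∀ w₁ ∈ W, ∀ w₂ ∈ W, Φ (w₁ + w₂) = Φ w₁ + Φ w₂ := by
      intro w₁ hw₁ w₂ hw₂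
      have h := L.map_add ⟨w₁, hw₁⟩ ⟨w₂, hw₂⟩
      have h1 : SeparationQuotient.mk (Φ (w₁ + w₂)) = SeparationQuotient.mk (Φ w₁ + Φ w₂) := by
        have := congrArg Subtype.val h
        rw [hLe] at this
        simpa [hLe] using this
      have h2 : ‖Φ (w₁ + w₂) - (Φ w₁ + Φ w₂)‖ = 0 := by
        rw [← SeparationQuotient.norm_mk]
        have : SeparationQuotient.mk (Φ (w₁ + w₂) - (Φ w₁ + Φ w₂))
            = SeparationQuotient.mk (Φ (w₁ + w₂)) - SeparationQuotient.mk (Φ w₁ + Φ w₂) := rfl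
        rw [this, h1, sub_self, norm_zero]
      exact hkey _ ⟨w₁ + w₂, W.add_mem hw₁ hw₂, rfl⟩ _
        (haddS _ ⟨w₁, hw₁, rfl⟩ _ ⟨w₂, hw₂, rfl⟩) h2
    -- homogeneity on W
    have hsmulW : ∀ (c : ℝ), ∀ w ∈ W, Φ (c • w) = c • Φ w := by
      intro c w hw
      have h := L.map_smul c ⟨w, hw⟩
      have h1 : SeparationQuotient.mk (Φ (c • w)) = SeparationQuotient.mk (c • Φ w) := by
        have := congrArg Subtype.val h
        rw [hLe] at this
        simpa [hLe] using this
      have h2 : ‖Φ (c • w) - c • Φ w‖ = 0 := by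
        rw [← SeparationQuotient.norm_mk]
        have : SeparationQuotient.mk (Φ (c • w) - c • Φ w)
            = SeparationQuotient.mk (Φ (c • w)) - SeparationQuotient.mk (c • Φ w) := rfl
        rw [this, h1, sub_self, norm_zero]
      exact hkey _ ⟨c • w, W.smul_mem c hw, rfl⟩ _
        (hsmulS c _ ⟨w, hw, rfl⟩) h2
    -- assemble
    constructor
    · intro x₁ x₂
      obtain ⟨w₁, hw₁, z₁, hz₁, rfl⟩ := hdecomp x₁
      obtain ⟨w₂, hw₂, z₂, hz₂, rfl⟩ := hdecomp x₂
      have hz12 : ‖z₁ + z₂‖ = 0 :=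
        le_antisymm (by calc ‖z₁ + z₂‖ ≤ ‖z₁‖ + ‖z₂‖ := norm_add_le _ _
                          _ = 0 := by rw [hz₁, hz₂, add_zero]) (norm_nonneg _)
      have hre : w₁ + z₁ + (w₂ + z₂) = (w₁ + w₂) + (z₁ + z₂) := by abel
      rw [hre, hWZ _ (W.add_mem hw₁ hw₂) _ hz12, haddW _ hw₁ _ hw₂, haddZ _ _ hz₁ hz₂,
        hWZ _ hw₁ _ hz₁, hWZ _ hw₂ _ hz₂]
      abel
    · intro c x
      obtain ⟨w, hw, z, hz, rfl⟩ := hdecomp x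
      have hcz : ‖c • z‖ = 0 := by rw [norm_smul, hz, mul_zero]
      rw [smul_add, hWZ _ (W.smul_mem c hw) _ hcz, hsmulW c _ hw, hsmulZ c _ hz,
        hWZ _ hw _ hz, smul_add]
end

section
/- Let X be a seminormed real vector space, let Y be a normed real vector space, and let Φ : X → Y be a pseudo-isometry (a pseudoisometric embedding such that for every u ∈ Y there exists v ∈ X with ‖Φ v − u‖ = 0). Then the following are equivalent: (1) Φ is linear; (2) Φ(0) = 0. -/
open SeparationQuotient

/-- A pseudo-isometry of a seminormed real vector space onto a normed real
vector space is linear if and only if it maps zero to zero. -/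
theorem pseudoIsometry_linear_iff_map_zero
    {X Y : Type*} [SeminormedAddCommGroup X] [NormedSpace ℝ X]
    [SeminormedAddCommGroup Y] [NormedSpace ℝ Y]
    (hY : ∀ y : Y, ‖y‖ = 0 → y = 0)
    (Φ : X → Y)
    (hiso : ∀ x₁ x₂ : X, ‖Φ x₁ - Φ x₂‖ = ‖x₁ - x₂‖)
    (hsur : ∀ u : Y, ∃ v : X, ‖Φ v - u‖ = 0) :
    IsLinearMap ℝ Φ ↔ Φ 0 = 0 := by
  constructor
  · intro h; exact (IsLinearMap.mk' Φ h).map_zero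
  intro h0
  -- `Φ` is surjective
  have hsurj : Function.Surjective Φ := fun u => by
    obtain ⟨v, hv⟩ := hsur u
    exact ⟨v, sub_eq_zero.mp (hY _ hv)⟩
  -- inseparability facts
  have insepX : ∀ x₁ x₂ : X, Inseparable x₁ x₂ ↔ ‖x₁ - x₂‖ = 0 := fun x₁ x₂ => by
    rw [Metric.inseparable_iff, dist_eq_norm]
  have insepY : ∀ y₁ y₂ : Y, Inseparable y₁ y₂ ↔ y₁ = y₂ := fun y₁ y₂ => by
    rw [Metric.inseparable_iff, dist_eq_norm]
    exact ⟨fun h => sub_eq_zero.mp (hY _ h), fun h => by simp [h]⟩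
  have mkY_inj : Function.Injective (mk : Y → SeparationQuotient Y) := fun a b hab =>
    (insepY a b).mp (mk_eq_mk.mp hab)
  -- the induced map between separation quotients
  have hresp : ∀ x₁ x₂ : X, Inseparable x₁ x₂ → mk (Φ x₁) = mk (Φ x₂) := fun x₁ x₂ hx => by
    refine mk_eq_mk.mpr ((insepY _ _).mpr (sub_eq_zero.mp (hY _ ?_)))
    rw [hiso, ← (insepX x₁ x₂).mp hx]
  set f : SeparationQuotient X → SeparationQuotient Y :=
    SeparationQuotient.lift (fun x => mk (Φ x)) hresp with hf
  have hf_mk : ∀ x : X, f (mk x) = mk (Φ x) := fun x => rfl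
  have hinj : Function.Injective f := by
    intro a b hab
    obtain ⟨x, rfl⟩ := surjective_mk a
    obtain ⟨y, rfl⟩ := surjective_mk b
    rw [hf_mk, hf_mk] at hab
    refine mk_eq_mk.mpr ((insepX x y).mpr ?_)
    rw [← hiso]
    simp [mkY_inj hab]
  have hsurjf : Function.Surjective f := by
    intro b
    obtain ⟨u, rfl⟩ := surjective_mk b
    obtain ⟨v, rfl⟩ := hsurj u
    exact ⟨mk v, rfl⟩
  have hisom : Isometry f := by
    apply Isometry.of_dist_eq
    intro a b
    obtain ⟨x, rfl⟩ := surjective_mk a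
    obtain ⟨y, rfl⟩ := surjective_mk b
    rw [hf_mk, hf_mk]
    show dist (mk (Φ x)) (mk (Φ y)) = dist (mk x) (mk y)
    rw [dist_eq_norm, dist_eq_norm, ← mk_sub, ← mk_sub, norm_mk, norm_mk, hiso]
  set e : SeparationQuotient X ≃ᵢ SeparationQuotient Y :=
    ⟨Equiv.ofBijective f ⟨hinj, hsurjf⟩, hisom⟩ with he
  have he_apply : ∀ a, e a = f a := fun a => rfl
  have he0 : e 0 = 0 := by
    have : (0 : SeparationQuotient X) = mk 0 := (mk_zero).symm
    rw [this, he_apply, hf_mk, h0, mk_zero]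
  set L := e.toRealLinearIsometryEquivOfMapZero he0 with hL
  have hLe : ∀ a, L a = f a := fun a => by
    rw [hL, IsometryEquiv.coe_toRealLinearIsometryEquivOfMapZero]; rfl
  constructor
  · intro x y
    apply mkY_inj
    have : mk (Φ (x + y)) = f (mk (x + y)) := rfl
    rw [this, ← hLe]
    have : (mk (x + y) : SeparationQuotient X) = mk x + mk y := mk_add x y
    rw [this, map_add, hLe, hLe, hf_mk, hf_mk, mk_add]
  · intro c x
    apply mkY_inj
    have : mk (Φ (c • x)) = f (mk (c • x)) := rfl
    rw [this, ← hLe]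
    have : (mk (c • x) : SeparationQuotient X) = c • mk x := mk_smul c x
    rw [this, map_smul, hLe, hf_mk, mk_smul]
end
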